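/- Let m, n ≥ 2, let u ∈ ℝ^{m−1}, v ∈ ℝ^{n−1}, and θ, φ ∈ ℝ. Define x, x' ∈ ℝ^m by x(j) = u(j)·cos θ − u(j−1)·sin θ and x'(j) = u(j)·cos φ − u(j−1)·sin φ for 1 ≤ j ≤ m (conventions u(0) = u(m) = 0), and define y, y' ∈ ℝ^n by y(l) = v(l−1)·sin φ − v(l)·cos φ and y'(l) = v(l−1)·sin θ − v(l)·cos θ for 1 ≤ l ≤ n (conventions v(0) = v(n) = 0). Then x·yᵀ − x'·y'ᵀ = sin(φ − θ)·Q, where Q ∈ ℝ^{m×n} is given by Q(k,l) = u(k)·v(l−1) − u(k−1)·v(l); in particular, x ⋆ y = x' ⋆ y'. -/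

import Mathlib

open scoped BigOperators
open MeasureTheory

noncomputable section

/-- 1-based access into a vector `u ∈ ℝ^d`, with the convention that
out-of-range indices (including `0` and anything `> d`) give `0`. -/
def pad1 {d : ℕ} (u : Fin d → ℝ) (i : ℕ) : ℝ :=
  if h : 1 ≤ i ∧ i ≤ d then u ⟨i - 1, by omega⟩ else 0

/-- The lifted linear convolution map `S_{(m,n)} : ℝ^{m×n} → ℝ^{m+n-1}`,
summing the entries of a matrix along its anti-diagonals. -/
def liftS (m n : ℕ) (W : Matrix (Fin m) (Fin n) ℝ) : Fin (m + n - 1) → ℝ :=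
  fun l => ∑ k : Fin m, ∑ j : Fin n, if (k : ℕ) + (j : ℕ) = (l : ℕ) then W k j else 0

/-- Linear convolution `x ⋆ y ∈ ℝ^{m+n-1}` of `x ∈ ℝ^m` and `y ∈ ℝ^n`. -/
def conv {m n : ℕ} (x : Fin m → ℝ) (y : Fin n → ℝ) : Fin (m + n - 1) → ℝ :=
  fun l => ∑ k : Fin m, ∑ j : Fin n, if (k : ℕ) + (j : ℕ) = (l : ℕ) then x k * y j else 0

/-- The rank-two null space `N(S_{(m,n)}, 2)`. -/
def rankTwoNull (m n : ℕ) : Set (Matrix (Fin m) (Fin n) ℝ) :=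
  {Q | Q.rank ≤ 2 ∧ liftS m n Q = 0}

/-- The parametrized family `N0(m,n)`:
`Q(k,l) = u(k)·v(l−1) − u(k−1)·v(l)` (1-based, with zero-padding conventions). -/
def N0set (m n : ℕ) : Set (Matrix (Fin m) (Fin n) ℝ) :=
  {Q | ∃ (u : Fin (m - 1) → ℝ) (v : Fin (n - 1) → ℝ),
    ∀ (k : Fin m) (l : Fin n),
      Q k l = pad1 u ((k : ℕ) + 1) * pad1 v (l : ℕ) - pad1 u (k : ℕ) * pad1 v ((l : ℕ) + 1)}

/-- The recursively defined family `N2(m,n)`: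
`Q(k,l) = u₁(k)·v₁(l−1) + u₂(k−1)·v₂(l)` (1-based, with zero-padding conventions),
where `u₁v₁ᵀ + u₂v₂ᵀ ∈ N(S_{(m-1,n-1)}, 2) \ {0}`. -/
def N2set (m n : ℕ) : Set (Matrix (Fin m) (Fin n) ℝ) :=
  {Q | ∃ (u₁ u₂ : Fin (m - 1) → ℝ) (v₁ v₂ : Fin (n - 1) → ℝ),
    (Matrix.of fun i j => u₁ i * v₁ j + u₂ i * v₂ j) ∈ rankTwoNull (m - 1) (n - 1) ∧
    (Matrix.of fun i j => u₁ i * v₁ j + u₂ i * v₂ j) ≠ (0 : Matrix (Fin (m - 1)) (Fin (n - 1)) ℝ) ∧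
    ∀ (k : Fin m) (l : Fin n),
      Q k l = pad1 u₁ ((k : ℕ) + 1) * pad1 v₁ (l : ℕ) + pad1 u₂ (k : ℕ) * pad1 v₂ ((l : ℕ) + 1)}

/-- The exceptional set `M(m,n) = {Q ∈ N(S_{(m,n)}, 2) : Q(m,1) = 0 and Q(1,n) = 0}` (1-based). -/
def Mexc (m n : ℕ) (hm : 0 < m) (hn : 0 < n) : Set (Matrix (Fin m) (Fin n) ℝ) :=
  {Q | Q ∈ rankTwoNull m n ∧ Q ⟨m - 1, by omega⟩ ⟨0, hn⟩ = 0 ∧ Q ⟨0, hm⟩ ⟨n - 1, by omega⟩ = 0}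

/-- Identifiability of the pair `p = (x,y)` with respect to linear convolution
and the constraint set `K`. -/
def Identifiable {m n : ℕ} (K : Set ((Fin m → ℝ) × (Fin n → ℝ)))
    (p : (Fin m → ℝ) × (Fin n → ℝ)) : Prop :=
  ∀ q ∈ K, conv q.1 q.2 = conv p.1 p.2 →
    ∃ α : ℝ, α ≠ 0 ∧ q.1 = α • p.1 ∧ q.2 = (1 / α) • p.2

/-- The quotient set `Q∼(w,d)`: pairs `(w*, γ) ∈ ℝ^{d-1} × [0, 2π)` with
`w(j) = w*(j)·cos γ − w*(j−1)·sin γ` for `1 ≤ j ≤ d` (1-based, zero-padding conventions). -/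
def quotSet (d : ℕ) (w : Fin d → ℝ) : Set ((Fin (d - 1) → ℝ) × ℝ) :=
  {p | p.2 ∈ Set.Ico 0 (2 * Real.pi) ∧
    ∀ j : Fin d, w j = pad1 p.1 ((j : ℕ) + 1) * Real.cos p.2 - pad1 p.1 (j : ℕ) * Real.sin p.2}

/-- Matrices over `ℝ` carry the (product) metric space structure of `ℝ^{m×n}`. -/
instance {m n : ℕ} : MetricSpace (Matrix (Fin m) (Fin n) ℝ) :=
  show MetricSpace (Fin m → Fin n → ℝ) from inferInstance

/-!
Expanding `sin (φ - θ)` gives the entrywise identity. Writing `a = pad1 u` and `b = pad1 v`, the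
entries of `Q` are `a (k + 1) * b l - a k * b (l + 1)`, so each anti-diagonal sum of `Q` telescopes
to `a (L + 1) * b 0 - a 0 * b (L + 1) = 0`. Hence `x ⋆ y - x' ⋆ y' = sin (φ - θ) • S(Q) = 0`.
-/

open Finset Matrix

theorem pad1_zero {d : ℕ} (u : Fin d → ℝ) : pad1 u 0 = 0 := by
  simp [pad1]

theorem pad1_eq_zero_of_le {d : ℕ} (u : Fin (d - 1) → ℝ) {i : ℕ} (h : d ≤ i) : pad1 u i = 0 := by
  unfold pad1
  split_ifs with h'
  · omega
  · rfl

theorem liftS_sub (m n : ℕ) (A B : Matrix (Fin m) (Fin n) ℝ) :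
    liftS m n (A - B) = liftS m n A - liftS m n B := by
  funext l
  simp only [liftS, Pi.sub_apply, Matrix.sub_apply, ← sum_sub_distrib]
  congr! 2
  split_ifs <;> simp

theorem liftS_smul (m n : ℕ) (c : ℝ) (A : Matrix (Fin m) (Fin n) ℝ) :
    liftS m n (c • A) = c • liftS m n A := by
  funext l
  simp only [liftS, Pi.smul_apply, Matrix.smul_apply, smul_eq_mul, mul_sum]
  congr! 2
  split_ifs <;> simp

theorem conv_eq_liftS_vecMulVec {m n : ℕ} (x : Fin m → ℝ) (y : Fin n → ℝ) :
    conv x y = liftS m n (vecMulVec x y) :=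
  rfl

theorem sum_antidiagonal_shift_sub {R : Type*} [CommRing R] (a b : ℕ → R) (L : ℕ) :
    ∑ p ∈ antidiagonal L, (a (p.1 + 1) * b p.2 - a p.1 * b (p.2 + 1))
      = a (L + 1) * b 0 - a 0 * b (L + 1) := by
  have h₁ := Nat.sum_antidiagonal_succ (n := L) (f := fun p => a p.1 * b p.2)
  have h₂ := Nat.sum_antidiagonal_succ' (n := L) (f := fun p => a p.1 * b p.2)
  simp only [sum_sub_distrib]
  linear_combination h₂ - h₁

theorem liftS_apply_eq_sum_antidiagonal {m n : ℕ} (F : ℕ → ℕ → ℝ)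
    (hFm : ∀ k j, m ≤ k → F k j = 0) (hFn : ∀ k j, n ≤ j → F k j = 0) (l : Fin (m + n - 1)) :
    liftS m n (Matrix.of fun k j => F k j) l = ∑ p ∈ antidiagonal (l : ℕ), F p.1 p.2 := by
  rw [liftS, ← Fintype.sum_prod_type']
  refine sum_bij_ne_zero (fun kj _ _ => ((kj.1 : ℕ), (kj.2 : ℕ))) ?_ ?_ ?_ ?_
  · intro kj _ hne
    rw [HasAntidiagonal.mem_antidiagonal]
    by_contra h
    simp [h] at hne
  · intro _ _ _ _ _ _ h
    simp only [Prod.mk.injEq] at h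
    exact Prod.ext (Fin.ext h.1) (Fin.ext h.2)
  · intro p hp hne
    have hk : p.1 < m := by by_contra h; exact hne (hFm _ _ (not_lt.mp h))
    have hj : p.2 < n := by by_contra h; exact hne (hFn _ _ (not_lt.mp h))
    exact ⟨(⟨p.1, hk⟩, ⟨p.2, hj⟩), mem_univ _, by simp_all, rfl⟩
  · intro kj _ hne
    simp only [of_apply]
    split_ifs with h
    · rfl
    · simp [h] at hne

theorem liftS_shift_sub_eq_zero {m n : ℕ} (a b : ℕ → ℝ) (ha₀ : a 0 = 0) (hb₀ : b 0 = 0)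
    (ha : ∀ k, m ≤ k → a k = 0) (hb : ∀ j, n ≤ j → b j = 0) :
    liftS m n (Matrix.of fun k j => a ((k : ℕ) + 1) * b j - a k * b ((j : ℕ) + 1)) = 0 := by
  funext l
  rw [liftS_apply_eq_sum_antidiagonal (fun k j => a (k + 1) * b j - a k * b (j + 1))
    (fun k j hk => by simp [ha k hk, ha (k + 1) (by omega)])
    (fun k j hj => by simp [hb j hj, hb (j + 1) (by omega)]),
    sum_antidiagonal_shift_sub, ha₀, hb₀]
  simp

theorem stmt19_general (m n : ℕ)
    (u : Fin (m - 1) → ℝ) (v : Fin (n - 1) → ℝ) (θ φ : ℝ) :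
    let x : Fin m → ℝ := fun j =>
      pad1 u ((j : ℕ) + 1) * Real.cos θ - pad1 u (j : ℕ) * Real.sin θ
    let x' : Fin m → ℝ := fun j =>
      pad1 u ((j : ℕ) + 1) * Real.cos φ - pad1 u (j : ℕ) * Real.sin φ
    let y : Fin n → ℝ := fun l =>
      pad1 v (l : ℕ) * Real.sin φ - pad1 v ((l : ℕ) + 1) * Real.cos φ
    let y' : Fin n → ℝ := fun l =>
      pad1 v (l : ℕ) * Real.sin θ - pad1 v ((l : ℕ) + 1) * Real.cos θ
    (∀ (k : Fin m) (l : Fin n),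
      x k * y l - x' k * y' l
        = Real.sin (φ - θ) *
            (pad1 u ((k : ℕ) + 1) * pad1 v (l : ℕ) - pad1 u (k : ℕ) * pad1 v ((l : ℕ) + 1))) ∧
    conv x y = conv x' y' := by
  intro x x' y y'
  have hentry : ∀ (k : Fin m) (l : Fin n), x k * y l - x' k * y' l
      = Real.sin (φ - θ) *
          (pad1 u ((k : ℕ) + 1) * pad1 v (l : ℕ) - pad1 u (k : ℕ) * pad1 v ((l : ℕ) + 1)) := by
    intro k l
    simp only [x, x', y, y', Real.sin_sub]
    ring
  refine ⟨hentry, ?_⟩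
  have hmat : vecMulVec x y - vecMulVec x' y' = Real.sin (φ - θ) •
      Matrix.of fun (k : Fin m) (l : Fin n) =>
        pad1 u ((k : ℕ) + 1) * pad1 v (l : ℕ) - pad1 u (k : ℕ) * pad1 v ((l : ℕ) + 1) := by
    ext k l
    exact hentry k l
  rw [← sub_eq_zero, conv_eq_liftS_vecMulVec, conv_eq_liftS_vecMulVec, ← liftS_sub, hmat,
    liftS_smul, liftS_shift_sub_eq_zero _ _ (pad1_zero u) (pad1_zero v)
      (fun _ => pad1_eq_zero_of_le u) (fun _ => pad1_eq_zero_of_le v), smul_zero]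

/-- with `x, x', y, y'` built from seed vectors `u, v` and angles `θ, φ`,
`x·yᵀ − x'·y'ᵀ = sin(φ − θ)·Q` with `Q(k,l) = u(k)·v(l−1) − u(k−1)·v(l)`;
in particular `x ⋆ y = x' ⋆ y'`. -/
theorem stmt19 (m n : ℕ) (hm : 2 ≤ m) (hn : 2 ≤ n)
    (u : Fin (m - 1) → ℝ) (v : Fin (n - 1) → ℝ) (θ φ : ℝ) :
    let x : Fin m → ℝ := fun j =>
      pad1 u ((j : ℕ) + 1) * Real.cos θ - pad1 u (j : ℕ) * Real.sin θ
    let x' : Fin m → ℝ := fun j =>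
      pad1 u ((j : ℕ) + 1) * Real.cos φ - pad1 u (j : ℕ) * Real.sin φ
    let y : Fin n → ℝ := fun l =>
      pad1 v (l : ℕ) * Real.sin φ - pad1 v ((l : ℕ) + 1) * Real.cos φ
    let y' : Fin n → ℝ := fun l =>
      pad1 v (l : ℕ) * Real.sin θ - pad1 v ((l : ℕ) + 1) * Real.cos θ
    (∀ (k : Fin m) (l : Fin n),
      x k * y l - x' k * y' l
        = Real.sin (φ - θ) *
            (pad1 u ((k : ℕ) + 1) * pad1 v (l : ℕ) - pad1 u (k : ℕ) * pad1 v ((l : ℕ) + 1))) ∧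
    conv x y = conv x' y' :=
  stmt19_general m n u v θ φ
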